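/- Let M be a topological space equipped with a Borel measure μ̂ that is positive on every nonempty open set, let Υ : M → ℝ, let n, k ∈ ℝ with k ≠ n/2, let P and P̂ be ℝ-linear operators on real-valued functions on M such that P̂ is the (n/2+k, n/2-k)-conformal transform of P by Υ, and suppose P̂ is formally self-adjoint with respect to μ̂. Let u : M → ℝ be continuous with P u = 0, u(x) ≥ 0 for all x, and u not identically zero, and suppose Υ is continuous and û := x ↦ exp((k-n/2)·Υ(x))·u(x) is integrable with respect to μ̂. Then P̂ 1 is not a nonzero constant function: there is no real number C ≠ 0 with (P̂ 1)(x) = C for all x ∈ M. -/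
import Mathlib


open Real MeasureTheory

/-- Theorem 5.5(2) of the paper: if the kernel of `P` contains a continuous
nonnegative function `u` which is not identically zero, then for any conformal
factor `Υ` (with `û = e^{(k-n/2)Υ} u` integrable) the transformed operator
`P̂` cannot satisfy `P̂ 1 = C` for a nonzero constant `C`; i.e. there is no
metric in the conformal class with nonzero constant `Q_k`-curvature. -/
theorem no_nonzero_constant_Qk_curvature
    {M : Type*} [TopologicalSpace M] [MeasurableSpace M] [BorelSpace M]
    (μhat : Measure M) [μhat.IsOpenPosMeasure] (Υ : M → ℝ) (n k : ℝ)
    (hk : k ≠ n / 2)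
    (P Phat : (M → ℝ) →ₗ[ℝ] (M → ℝ))
    (hconf : ∀ (f : M → ℝ) (x : M),
      Phat f x = Real.exp (-(n / 2 + k) * Υ x)
        * P (fun y => Real.exp ((n / 2 - k) * Υ y) * f y) x)
    (hsa : ∀ f g : M → ℝ,
      ∫ x, f x * Phat g x ∂μhat = ∫ x, Phat f x * g x ∂μhat)
    (u : M → ℝ) (hucont : Continuous u) (hu : P u = 0)
    (hunn : ∀ x : M, 0 ≤ u x) (hune : u ≠ 0)
    (hΥcont : Continuous Υ)
    (hint : Integrable (fun x => Real.exp ((k - n / 2) * Υ x) * u x) μhat) :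
    ¬ ∃ C : ℝ, C ≠ 0 ∧ ∀ x : M, Phat (fun _ => (1 : ℝ)) x = C := by
  rintro ⟨C, hC, hPhat1⟩
  set uhat : M → ℝ := fun x => Real.exp ((k - n / 2) * Υ x) * u x with huhat
  -- P̂ û = 0
  have hPhu : Phat uhat = 0 := by
    funext x
    have h1 : (fun y => Real.exp ((n / 2 - k) * Υ y) * uhat y) = u := by
      funext y
      simp only [huhat]
      rw [← mul_assoc, ← Real.exp_add]
      ring_nf
      simp
    rw [hconf, h1, hu]
    simp
  -- self-adjointness computation
  have key := hsa uhat (fun _ => (1 : ℝ))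
  have hL : ∫ x, uhat x * Phat (fun _ => (1 : ℝ)) x ∂μhat = C * ∫ x, uhat x ∂μhat := by
    rw [← integral_const_mul]
    congr 1; funext x; rw [hPhat1 x]; ring
  have hR : ∫ x, Phat uhat x * (1 : ℝ) ∂μhat = 0 := by
    rw [hPhu]; simp
  rw [hL, hR] at key
  have hint0 : ∫ x, uhat x ∂μhat = 0 := by
    rcases mul_eq_zero.mp key with h | h
    · exact absurd h hC
    · exact h
  have huhatnn : ∀ x, 0 ≤ uhat x := fun x =>
    mul_nonneg (Real.exp_pos _).le (hunn x)
  have huhatcont : Continuous uhat :=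
    (Real.continuous_exp.comp (continuous_const.mul hΥcont)).mul hucont
  have hae : uhat =ᵐ[μhat] 0 := by
    have := (integral_eq_zero_iff_of_nonneg huhatnn hint).mp hint0
    exact this
  have heq : uhat = 0 :=
    (Continuous.ae_eq_iff_eq μhat huhatcont continuous_const).mp hae
  apply hune
  funext x
  have := congrFun heq x
  simp only [huhat, Pi.zero_apply] at this ⊢
  rcases mul_eq_zero.mp this with h | h
  · exact absurd h (Real.exp_pos _).ne'
  · exact h
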